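/- Let A = [A_{ij}] and B = [B_{ij}] be positive definite complex matrices of size nk × nk, each regarded as an n × n block matrix with k × k blocks, and let 2 ≤ μ ≤ n. Then det( (A_μ ∘ B_μ)/(A_{μ−1} ∘ B_{μ−1}) ) + det( (A_μ/A_{μ−1}) ∘ (B_μ/B_{μ−1}) ) ≥ det( A_{μμ} ∘ (B_μ/B_{μ−1}) ) + det( B_{μμ} ∘ (A_μ/A_{μ−1}) ), where all four determinants are of positive semidefinite k × k matrices (hence nonnegative reals) and the inequality is of real numbers. -/

import Mathlib

open Matrix ComplexOrder

/-- The `μk × μk` leading principal block submatrix `A_μ` (for `μ ≤ n`) of an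
`n × n` block matrix with `k × k` blocks. -/
def leadBlock {n k : ℕ} (A : Matrix (Fin n × Fin k) (Fin n × Fin k) ℂ)
    (μ : ℕ) (h : μ ≤ n) : Matrix (Fin μ × Fin k) (Fin μ × Fin k) ℂ :=
  A.submatrix (fun p => (Fin.castLE h p.1, p.2)) (fun p => (Fin.castLE h p.1, p.2))

/-- The `μ`-th (1-based) diagonal `k × k` block `A_{μμ}` of an
`n × n` block matrix with `k × k` blocks. -/
def diagBlock {n k : ℕ} (A : Matrix (Fin n × Fin k) (Fin n × Fin k) ℂ)
    (μ : ℕ) (h : μ - 1 < n) : Matrix (Fin k) (Fin k) ℂ :=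
  Matrix.of fun a b => A (⟨μ - 1, h⟩, a) (⟨μ - 1, h⟩, b)

/-- The `k × k` Schur complement `A_μ / A_{μ-1}` of the leading principal block
submatrix `A_{μ-1}` in the leading principal block submatrix `A_μ`, i.e.
`A_{μμ} − M₂₁ A_{μ-1}⁻¹ M₁₂` where `M₂₁` (resp. `M₁₂`) is the `μ`-th block row
(resp. column) of `A_μ` with its last block removed. -/
noncomputable def schurLead {n k : ℕ} (A : Matrix (Fin n × Fin k) (Fin n × Fin k) ℂ)
    (μ : ℕ) (h : μ - 1 < n) : Matrix (Fin k) (Fin k) ℂ :=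
  diagBlock A μ h -
    (Matrix.of fun a (p : Fin (μ - 1) × Fin k) =>
        A (⟨μ - 1, h⟩, a) (Fin.castLE h.le p.1, p.2)) *
      (leadBlock A (μ - 1) h.le)⁻¹ *
      (Matrix.of fun (p : Fin (μ - 1) × Fin k) b =>
        A (Fin.castLE h.le p.1, p.2) (⟨μ - 1, h⟩, b))

/-!
Partition `A_μ = [[A', X], [Xᴴ, D_A]]` with `A' = A_{μ-1}`, `D_A = A_{μμ}`, so that
`A_μ / A_{μ-1} = S_A = D_A - E_A` with `E_A = Xᴴ A'⁻¹ X ⪰ 0`, and likewise for `B`.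
Then `D_A ∘ S_B = R + P` and `D_B ∘ S_A = R + Q` with `R = S_A ∘ S_B ≻ 0`,
`P = E_A ∘ S_B ⪰ 0` and `Q = S_A ∘ E_B ⪰ 0`, and supermodularity of `det` on the
positive semidefinite cone gives `det (R + P) + det (R + Q) ≤ det (R + P + Q) + det R`.
Since `[[A', X], [Xᴴ, E_A]] ⪰ 0`, the Schur product theorem shows
`(A ∘ B)_μ / (A ∘ B)_{μ-1} ⪰ D_A ∘ D_B - E_A ∘ E_B = R + P + Q`, and `det` is monotone.

Supermodularity reduces, by writing positive semidefinite matrices as sums of `v vᴴ`,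
to two rank-one updates, where the matrix determinant lemma shows that the defect is
`det R · det G` for the Gram matrix `G` of `v, w` with respect to `R⁻¹`.
-/

namespace Matrix

variable {m : Type*} [Fintype m] [DecidableEq m]

theorem det_add_vecMulVec_self_star {R : Matrix m m ℂ} (hR : IsUnit R.det) (v : m → ℂ) :
    (R + vecMulVec v (star v)).det = R.det * (1 + star v ⬝ᵥ R⁻¹ *ᵥ v) := by
  rw [vecMulVec_eq Unit, det_add_replicateCol_mul_replicateRow hR, det_unique (1 + _)]
  simp [Matrix.mul_assoc, mul_apply, dotProduct, mulVec]

omit [DecidableEq m] in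
theorem conjTranspose_mul_mul_apply {ι : Type*} [Fintype ι] (M : Matrix m m ℂ)
    (U : Matrix m ι ℂ) (s t : ι) :
    (Uᴴ * M * U) s t = star (fun i => U i s) ⬝ᵥ M *ᵥ fun i => U i t := by
  simp only [mul_apply, conjTranspose_apply, dotProduct, mulVec, Pi.star_apply,
    Finset.mul_sum, Finset.sum_mul, mul_assoc]
  exact Finset.sum_comm

omit [DecidableEq m] in
@[elab_as_elim]
theorem PosSemidef.induction_on_vecMulVec {p : (P : Matrix m m ℂ) → P.PosSemidef → Prop}
    (zero : p 0 .zero)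
    (add : ∀ Q v (hQ : Q.PosSemidef), p Q hQ →
      p (Q + vecMulVec v (star v)) (hQ.add (posSemidef_vecMulVec_self_star v)))
    {P : Matrix m m ℂ} (hP : P.PosSemidef) : p P hP := by
  obtain ⟨N, v, rfl⟩ := posSemidef_iff_eq_sum_vecMulVec.mp hP
  induction N with
  | zero => simpa using zero
  | succ N ih =>
    simpa only [Fin.sum_univ_castSucc] using add _ (v (Fin.last N)) _
      (ih (fun i => v i.castSucc) (posSemidef_sum _ fun i _ => posSemidef_vecMulVec_self_star _))

theorem PosDef.det_le_det_add {R P : Matrix m m ℂ} (hR : R.PosDef) (hP : P.PosSemidef) :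
    R.det ≤ (R + P).det := by
  induction hP using PosSemidef.induction_on_vecMulVec with
  | zero => simp
  | add Q v hQ ih =>
    have hRQ := hR.add_posSemidef hQ
    calc R.det ≤ (R + Q).det := ih
      _ ≤ (R + Q).det * (1 + star v ⬝ᵥ (R + Q)⁻¹ *ᵥ v) :=
        le_mul_of_one_le_right hRQ.det_pos.le
          (le_add_of_nonneg_right (hRQ.inv.posSemidef.dotProduct_mulVec_nonneg v))
      _ = (R + (Q + vecMulVec v (star v))).det := by
        rw [← add_assoc, det_add_vecMulVec_self_star hRQ.det_pos.ne'.isUnit]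

def DetSupermodularAt (R P Q : Matrix m m ℂ) : Prop :=
  (R + P).det + (R + Q).det ≤ (R + P + Q).det + R.det

theorem detSupermodularAt_comm {R P Q : Matrix m m ℂ} :
    DetSupermodularAt R P Q ↔ DetSupermodularAt R Q P := by
  rw [DetSupermodularAt, DetSupermodularAt, add_comm (R + P).det, add_right_comm R]

theorem PosDef.detSupermodularAt_vecMulVec {R : Matrix m m ℂ} (hR : R.PosDef) (v w : m → ℂ) :
    DetSupermodularAt R (vecMulVec v (star v)) (vecMulVec w (star w)) := by
  set U : Matrix m (Fin 2) ℂ := (of ![v, w])ᵀ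
  set G := Uᴴ * R⁻¹ * U
  have hR' : IsUnit R.det := hR.det_pos.ne'.isUnit
  have hG : G.PosSemidef := hR.inv.posSemidef.conjTranspose_mul_mul_same U
  have hUU : vecMulVec v (star v) + vecMulVec w (star w) = U * Uᴴ := by
    ext
    simp [U, mul_apply, Fin.sum_univ_two, vecMulVec_apply]
  have hdet : (R + vecMulVec v (star v) + vecMulVec w (star w)).det + R.det =
      (R + vecMulVec v (star v)).det + (R + vecMulVec w (star w)).det + R.det * G.det := by
    rw [add_assoc, hUU, det_add_mul _ _ hR', det_add_vecMulVec_self_star hR',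
      det_add_vecMulVec_self_star hR', det_fin_two, det_fin_two]
    simp only [G, U, conjTranspose_mul_mul_apply, add_apply, one_apply_eq, one_apply_ne,
      transpose_apply, of_apply, cons_val_zero, cons_val_one, cons_val', cons_val_fin_one,
      Fin.isValue, ne_eq, zero_ne_one, one_ne_zero, not_false_eq_true, zero_add]
    ring
  rw [DetSupermodularAt, hdet]
  exact le_add_of_nonneg_right (mul_nonneg hR.det_pos.le hG.det_nonneg)

theorem detSupermodularAt_of_vecMulVec {P : Matrix m m ℂ}
    (h : ∀ R : Matrix m m ℂ, R.PosDef → ∀ v, DetSupermodularAt R P (vecMulVec v (star v)))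
    {R Q : Matrix m m ℂ} (hR : R.PosDef) (hQ : Q.PosSemidef) : DetSupermodularAt R P Q := by
  induction hQ using PosSemidef.induction_on_vecMulVec generalizing R with
  | zero => simp [DetSupermodularAt, add_comm]
  | add Q v hQ ih =>
    have h₁ := Complex.le_def.mp (ih hR)
    have h₂ := Complex.le_def.mp (h (R + Q) (hR.add_posSemidef hQ) v)
    rw [DetSupermodularAt, Complex.le_def]
    simp only [Complex.add_re, Complex.add_im, add_right_comm R Q P, ← add_assoc] at h₁ h₂ ⊢
    constructor <;> linarith

theorem PosDef.detSupermodularAt {R P Q : Matrix m m ℂ} (hR : R.PosDef) (hP : P.PosSemidef)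
    (hQ : Q.PosSemidef) : DetSupermodularAt R P Q := by
  refine detSupermodularAt_of_vecMulVec (fun R hR w => ?_) hR hQ
  refine detSupermodularAt_comm.mp (detSupermodularAt_of_vecMulVec (fun R hR v => ?_) hR hP)
  exact hR.detSupermodularAt_vecMulVec w v

omit [Fintype m] [DecidableEq m] in
theorem fromBlocks_hadamard {l n o α : Type*} [Mul α] (A A' : Matrix m l α)
    (B B' : Matrix m n α) (C C' : Matrix o l α) (D D' : Matrix o n α) :
    fromBlocks A B C D ⊙ fromBlocks A' B' C' D' =
      fromBlocks (A ⊙ A') (B ⊙ B') (C ⊙ C') (D ⊙ D') := by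
  ext (i | i) (j | j) <;> rfl

section SchurComplement

variable {l : Type*} [Fintype l]

theorem PosDef.posDef_and_schur_posDef_of_fromBlocks [DecidableEq l] {A : Matrix m m ℂ}
    {X : Matrix m l ℂ} {D : Matrix l l ℂ} (h : (fromBlocks A X Xᴴ D).PosDef) :
    A.PosDef ∧ (D - Xᴴ * A⁻¹ * X).PosDef := by
  have hA : A.PosDef := h.submatrix Sum.inl_injective
  have := hA.isUnit.invertible
  refine ⟨hA, ((PosDef.fromBlocks₁₁ X D hA).mp h.posSemidef).posDef_iff_det_ne_zero.mpr ?_⟩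
  have hdet := h.det_pos.ne'
  rwa [det_fromBlocks₁₁, invOf_eq_nonsing_inv, mul_ne_zero_iff,
    and_iff_right hA.det_pos.ne'] at hdet

open scoped MatrixOrder in
theorem PosDef.hadamard_conjTranspose_mul_inv_mul_le {A B : Matrix m m ℂ} (hA : A.PosDef)
    (hB : B.PosDef) (X Y : Matrix m l ℂ) :
    (X ⊙ Y)ᴴ * (A ⊙ B)⁻¹ * (X ⊙ Y) ≤ (Xᴴ * A⁻¹ * X) ⊙ (Yᴴ * B⁻¹ * Y) := by
  have hblock : ∀ {A : Matrix m m ℂ} (X : Matrix m l ℂ), A.PosDef →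
      (fromBlocks A X Xᴴ (Xᴴ * A⁻¹ * X)).PosSemidef := fun X hA => by
    have := hA.isUnit.invertible
    exact (PosDef.fromBlocks₁₁ X _ hA).mpr (by rw [sub_self]; exact .zero)
  have hAB := hA.hadamard hB
  have := hAB.isUnit.invertible
  have h := (hblock X hA).hadamard (hblock Y hB)
  rwa [fromBlocks_hadamard, hadamard_comm Xᴴ, ← conjTranspose_hadamard,
    PosDef.fromBlocks₁₁ _ _ hAB] at h

theorem PosDef.det_hadamard_schur_add_det_hadamard_schur_le [DecidableEq l]
    {A B : Matrix m m ℂ} {X Y : Matrix m l ℂ} {DA DB : Matrix l l ℂ}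
    (hA : (fromBlocks A X Xᴴ DA).PosDef) (hB : (fromBlocks B Y Yᴴ DB).PosDef) :
    (DA ⊙ (DB - Yᴴ * B⁻¹ * Y)).det + (DB ⊙ (DA - Xᴴ * A⁻¹ * X)).det ≤
      (DA ⊙ DB - (X ⊙ Y)ᴴ * (A ⊙ B)⁻¹ * (X ⊙ Y)).det +
        ((DA - Xᴴ * A⁻¹ * X) ⊙ (DB - Yᴴ * B⁻¹ * Y)).det := by
  obtain ⟨hA', hSA⟩ := hA.posDef_and_schur_posDef_of_fromBlocks
  obtain ⟨hB', hSB⟩ := hB.posDef_and_schur_posDef_of_fromBlocks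
  set EA := Xᴴ * A⁻¹ * X
  set EB := Yᴴ * B⁻¹ * Y
  set SA := DA - EA
  set SB := DB - EB
  have hEA : EA.PosSemidef := hA'.inv.posSemidef.conjTranspose_mul_mul_same X
  have hEB : EB.PosSemidef := hB'.inv.posSemidef.conjTranspose_mul_mul_same Y
  have hDA : DA = SA + EA := (sub_add_cancel _ _).symm
  have hDB : DB = SB + EB := (sub_add_cancel _ _).symm
  have hR := hSA.hadamard hSB
  have hP := hEA.hadamard hSB.posSemidef
  have hQ := hSA.posSemidef.hadamard hEB
  have hle : (DA ⊙ DB - (X ⊙ Y)ᴴ * (A ⊙ B)⁻¹ * (X ⊙ Y) -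
      (SA ⊙ SB + EA ⊙ SB + SA ⊙ EB)).PosSemidef := by
    have hDD : DA ⊙ DB = SA ⊙ SB + EA ⊙ SB + SA ⊙ EB + EA ⊙ EB := by
      rw [hDA, hDB, add_hadamard, hadamard_add, hadamard_add]
      abel
    rw [hDD, add_sub_assoc, add_sub_cancel_left]
    exact hA'.hadamard_conjTranspose_mul_inv_mul_le hB' X Y
  have hmono := (hR.add_posSemidef hP |>.add_posSemidef hQ).det_le_det_add hle
  rw [add_sub_cancel] at hmono
  calc (DA ⊙ SB).det + (DB ⊙ SA).det
      = (SA ⊙ SB + EA ⊙ SB).det + (SA ⊙ SB + SA ⊙ EB).det := by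
        rw [hadamard_comm DB, hDA, hDB, add_hadamard, hadamard_add]
    _ ≤ (SA ⊙ SB + EA ⊙ SB + SA ⊙ EB).det + (SA ⊙ SB).det := hR.detSupermodularAt hP hQ
    _ ≤ _ := by gcongr

end SchurComplement

end Matrix

section BlockMatrix

variable {n k : ℕ}

/-- The upper right block of `A_μ` partitioned as `[[A_{μ-1}, ·], [·, A_{μμ}]]`. -/
def upperBlockCol (A : Matrix (Fin n × Fin k) (Fin n × Fin k) ℂ) (μ : ℕ) (h : μ - 1 < n) :
    Matrix (Fin (μ - 1) × Fin k) (Fin k) ℂ :=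
  Matrix.of fun p b => A (Fin.castLE h.le p.1, p.2) (⟨μ - 1, h⟩, b)

def leadDiagEmb {μ : ℕ} (h : μ - 1 < n) :
    (Fin (μ - 1) × Fin k) ⊕ Fin k → Fin n × Fin k :=
  Sum.elim (Prod.map (Fin.castLE h.le) id) (Prod.mk ⟨μ - 1, h⟩)

theorem leadDiagEmb_injective {μ : ℕ} (h : μ - 1 < n) :
    (leadDiagEmb (k := k) h).Injective := by
  refine (Fin.castLE_injective h.le).prodMap Function.injective_id |>.sumElim
    (Prod.mk_right_injective _) fun p a hpa => ?_
  have := congrArg (Fin.val ∘ Prod.fst) hpa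
  simp only [Function.comp_apply, Prod.map_fst, Fin.val_castLE] at this
  omega

theorem submatrix_leadDiagEmb {A : Matrix (Fin n × Fin k) (Fin n × Fin k) ℂ}
    (hA : A.IsHermitian) {μ : ℕ} (h : μ - 1 < n) :
    A.submatrix (leadDiagEmb h) (leadDiagEmb h) =
      fromBlocks (leadBlock A (μ - 1) h.le) (upperBlockCol A μ h) (upperBlockCol A μ h)ᴴ
        (diagBlock A μ h) := by
  ext (p | a) (q | b)
  · rfl
  · rfl
  · exact (hA.apply _ _).symm
  · rfl

theorem schurLead_eq_of_isHermitian {A : Matrix (Fin n × Fin k) (Fin n × Fin k) ℂ}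
    (hA : A.IsHermitian) {μ : ℕ} (h : μ - 1 < n) :
    schurLead A μ h = diagBlock A μ h -
      (upperBlockCol A μ h)ᴴ * (leadBlock A (μ - 1) h.le)⁻¹ * upperBlockCol A μ h := by
  rw [schurLead]
  congr 3
  ext a p
  exact (hA.apply _ _).symm

end BlockMatrix

/-- **Proposition 2.4.** For positive definite block matrices `A, B ∈ M_n(M_k)` and
`2 ≤ μ ≤ n`,
`det((A_μ∘B_μ)/(A_{μ-1}∘B_{μ-1})) + det((A_μ/A_{μ-1})∘(B_μ/B_{μ-1})) ≥
 det(A_{μμ}∘(B_μ/B_{μ-1})) + det(B_{μμ}∘(A_μ/A_{μ-1}))`. -/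
theorem prop24_schur_det {n k : ℕ}
    (A B : Matrix (Fin n × Fin k) (Fin n × Fin k) ℂ)
    (hA : A.PosDef) (hB : B.PosDef)
    (μ : ℕ) (hμ2 : 2 ≤ μ) (hμn : μ ≤ n) :
    (schurLead (Matrix.hadamard A B) μ (by omega)).det.re +
      (Matrix.hadamard (schurLead A μ (by omega)) (schurLead B μ (by omega))).det.re ≥
    (Matrix.hadamard (diagBlock A μ (by omega)) (schurLead B μ (by omega))).det.re +
      (Matrix.hadamard (diagBlock B μ (by omega)) (schurLead A μ (by omega))).det.re := by
  have h : μ - 1 < n := by omega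
  have hblock := PosDef.det_hadamard_schur_add_det_hadamard_schur_le
    (submatrix_leadDiagEmb hA.isHermitian h ▸ hA.submatrix (leadDiagEmb_injective h))
    (submatrix_leadDiagEmb hB.isHermitian h ▸ hB.submatrix (leadDiagEmb_injective h))
  rw [← schurLead_eq_of_isHermitian hA.isHermitian,
    ← schurLead_eq_of_isHermitian hB.isHermitian] at hblock
  rw [ge_iff_le, ← Complex.add_re, ← Complex.add_re,
    schurLead_eq_of_isHermitian (hA.isHermitian.hadamard hB.isHermitian) h]
  exact Complex.re_le_re hblock
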